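/- Let X be a nonempty set, Z an ordered *-space, H a VE-space over Z, k : X × X → L*(H) a Hermitian kernel, and (K,V) a minimal VE-space linearisation of k. Then the linear map U : K → (functions X → H), (Uf)(x) = V(x)* f, is injective; and its range R = { V(·)* f : f ∈ K }, endowed with the gramian [Uf, Ug]_R := [f,g]_K (well defined by injectivity), is a minimal H-reproducing kernel VE-space on X with reproducing kernel k. -/

import Mathlib

/-!
Minimality of `(K, V)` means the vectors `V x h` span `K`, so `f ∈ K` with `V(x)* f = 0` for
every `x` is gramian-orthogonal to all of `K`, in particular to itself, and definiteness gives
`f = 0`. Hence `U` is a linear isomorphism of `K` onto its range, the gramian of `K` can be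
transported along it, and `U` maps `V x h` to the kernel function `k(·, x) h`: reproducibility is
the adjoint relation between `V x` and `V(x)*`, and minimality is the image of the spanning set.
-/

noncomputable section

/-- An ordered `*`-space structure on a complex vector space `Z` with involution:
a strict cone of selfadjoint elements. -/
structure StarCone (Z : Type*) [AddCommGroup Z] [Module ℂ Z] [StarAddMonoid Z]
    [StarModule ℂ Z] where
  pos : Set Z
  zero_mem : (0 : Z) ∈ pos
  add_mem : ∀ {x y : Z}, x ∈ pos → y ∈ pos → x + y ∈ pos
  smul_mem : ∀ {r : ℝ}, 0 ≤ r → ∀ {x : Z}, x ∈ pos → (r : ℂ) • x ∈ pos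
  strict : ∀ {x : Z}, x ∈ pos → -x ∈ pos → x = 0
  star_mem : ∀ {x : Z}, x ∈ pos → star x = x

/-- The partial order induced by the cone: `a ≤ b` iff `b - a` is positive. -/
def StarCone.le {Z : Type*} [AddCommGroup Z] [Module ℂ Z] [StarAddMonoid Z] [StarModule ℂ Z]
    (O : StarCone Z) (a b : Z) : Prop :=
  b - a ∈ O.pos

/-- A VE-space gramian on `E` over the ordered `*`-space `(Z, O)`: linear in the second
variable, Hermitian, positive and definite. -/
structure Gramian {Z : Type*} [AddCommGroup Z] [Module ℂ Z] [StarAddMonoid Z] [StarModule ℂ Z]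
    (O : StarCone Z) (E : Type*) [AddCommGroup E] [Module ℂ E] where
  inner : E → E → Z
  add_right : ∀ x y z : E, inner x (y + z) = inner x y + inner x z
  smul_right : ∀ (c : ℂ) (x y : E), inner x (c • y) = c • inner x y
  conj_symm : ∀ x y : E, inner x y = star (inner y x)
  inner_self_mem : ∀ x : E, inner x x ∈ O.pos
  definite : ∀ x : E, inner x x = 0 → x = 0

/-- A linear map `T` between VE-spaces over the same ordered `*`-space is adjointable if
it has an adjoint `S` with `[T e, f] = [e, S f]`. -/
def Adjointable {Z : Type*} [AddCommGroup Z] [Module ℂ Z] [StarAddMonoid Z] [StarModule ℂ Z]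
    {O : StarCone Z} {E F : Type*} [AddCommGroup E] [Module ℂ E] [AddCommGroup F] [Module ℂ F]
    (gE : Gramian O E) (gF : Gramian O F) (T : E →ₗ[ℂ] F) : Prop :=
  ∃ S : F →ₗ[ℂ] E, ∀ (e : E) (f : F), gF.inner (T e) f = gE.inner e (S f)

theorem Submodule.span_image_eq_top_of_surjective {R M N : Type*} [Semiring R]
    [AddCommMonoid M] [AddCommMonoid N] [Module R M] [Module R N] {f : M →ₗ[R] N}
    (hf : Function.Surjective f) {s : Set M} (hs : Submodule.span R s = ⊤) :
    Submodule.span R (f '' s) = ⊤ := by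
  rw [← Submodule.map_span, hs, Submodule.map_top, LinearMap.range_eq_top.2 hf]

namespace Gramian

variable {Z : Type*} [AddCommGroup Z] [Module ℂ Z] [StarAddMonoid Z] [StarModule ℂ Z]
  {O : StarCone Z} {E F : Type*} [AddCommGroup E] [Module ℂ E] [AddCommGroup F] [Module ℂ F]

def innerₗ (g : Gramian O E) (x : E) : E →ₗ[ℂ] Z where
  toFun := g.inner x
  map_add' := g.add_right x
  map_smul' c y := g.smul_right c x y

@[simp]
theorem inner_zero_right (g : Gramian O E) (x : E) : g.inner x 0 = 0 :=
  map_zero (g.innerₗ x)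

theorem eq_zero_of_span_eq_top (g : Gramian O E) {s : Set E} (hs : Submodule.span ℂ s = ⊤)
    {x : E} (hx : ∀ v ∈ s, g.inner x v = 0) : x = 0 :=
  g.definite x <| LinearMap.congr_fun (LinearMap.ext_on (f := g.innerₗ x) (g := 0) hs hx) x

def comap (g : Gramian O E) (T : F →ₗ[ℂ] E) (hT : Function.Injective T) : Gramian O F where
  inner a b := g.inner (T a) (T b)
  add_right a b c := by rw [map_add, g.add_right]
  smul_right c a b := by rw [map_smul, g.smul_right]
  conj_symm a b := g.conj_symm _ _
  inner_self_mem a := g.inner_self_mem _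
  definite a ha := (map_eq_zero_iff T hT).1 (g.definite _ ha)

@[simp]
theorem comap_inner (g : Gramian O E) (T : F →ₗ[ℂ] E) (hT : Function.Injective T) (a b : F) :
    (g.comap T hT).inner a b = g.inner (T a) (T b) := rfl

end Gramian

section Linearisation

variable {Z : Type*} [AddCommGroup Z] [Module ℂ Z] [StarAddMonoid Z] [StarModule ℂ Z]
  {O : StarCone Z} {H : Type*} [AddCommGroup H] [Module ℂ H] {gH : Gramian O H}
  {X K : Type*} [AddCommGroup K] [Module ℂ K] {gK : Gramian O K}
  {V : X → (H →ₗ[ℂ] K)} {Vadj : X → (K →ₗ[ℂ] H)}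

theorem inner_adjoint_apply_left
    (hV : ∀ (x : X) (e : H) (f : K), gK.inner (V x e) f = gH.inner e (Vadj x f))
    (x : X) (f : K) (h : H) : gH.inner (Vadj x f) h = gK.inner f (V x h) := by
  rw [gH.conj_symm, ← hV, ← gK.conj_symm]

theorem eq_zero_of_forall_adjoint_apply_eq_zero
    (hV : ∀ (x : X) (e : H) (f : K), gK.inner (V x e) f = gH.inner e (Vadj x f))
    (hmin : Submodule.span ℂ {v : K | ∃ (x : X) (h : H), V x h = v} = ⊤)
    {f : K} (hf : ∀ x, Vadj x f = 0) : f = 0 :=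
  gK.eq_zero_of_span_eq_top hmin <| by
    rintro _ ⟨x, h, rfl⟩
    rw [← inner_adjoint_apply_left hV, hf, gH.conj_symm, gH.inner_zero_right, star_zero]

end Linearisation

theorem minimal_linearisation_to_reproducing_kernel_general
    {Z : Type*} [AddCommGroup Z] [Module ℂ Z] [StarAddMonoid Z] [StarModule ℂ Z]
    (O : StarCone Z)
    {H : Type*} [AddCommGroup H] [Module ℂ H] (gH : Gramian O H)
    {X : Type*}
    (k : X → X → (H →ₗ[ℂ] H))
    {K : Type*} [AddCommGroup K] [Module ℂ K] (gK : Gramian O K)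
    (V : X → (H →ₗ[ℂ] K)) (Vadj : X → (K →ₗ[ℂ] H))
    (hV : ∀ (x : X) (e : H) (f : K), gK.inner (V x e) f = gH.inner e (Vadj x f))
    (hk : ∀ (x y : X) (h : H), k x y h = Vadj x (V y h))
    (hmin : Submodule.span ℂ {v : K | ∃ (x : X) (h : H), V x h = v} = ⊤)
    (U : K →ₗ[ℂ] (X → H)) (hU : ∀ (f : K) (x : X), U f x = Vadj x f) :
    Function.Injective U ∧
    ∃ gR : Gramian O ↥(LinearMap.range U),
      -- the gramian on the range is the transported one
      (∀ f g : K, gR.inner ⟨U f, LinearMap.mem_range_self U f⟩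
          ⟨U g, LinearMap.mem_range_self U g⟩ = gK.inner f g) ∧
      -- the kernel functions belong to the range and reproduce
      ∃ hmem : ∀ (x : X) (h : H), (fun y => k y x h) ∈ LinearMap.range U,
        (∀ (f : ↥(LinearMap.range U)) (x : X) (h : H),
          gH.inner ((f : X → H) x) h = gR.inner f ⟨fun y => k y x h, hmem x h⟩) ∧
        -- minimality of the reproducing kernel space
        Submodule.span ℂ {g : ↥(LinearMap.range U) |
          ∃ (x : X) (h : H), (g : X → H) = fun y => k y x h} = ⊤ := by
  have hinj : Function.Injective U := (injective_iff_map_eq_zero U).2 fun f hf =>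
    eq_zero_of_forall_adjoint_apply_eq_zero hV hmin fun x => by rw [← hU, hf, Pi.zero_apply]
  let e := LinearEquiv.ofInjective U hinj
  have he (f : K) : (e f : X → H) = U f := rfl
  have hkernel (x : X) (h : H) : (e (V x h) : X → H) = fun y => k y x h :=
    funext fun y => by rw [he, hU, hk]
  refine ⟨hinj, gK.comap e.symm.toLinearMap e.symm.injective, fun f g => ?_,
    fun x h => hkernel x h ▸ (e (V x h)).2, ?_, ?_⟩
  · exact congrArg₂ gK.inner (e.symm_apply_apply f) (e.symm_apply_apply g)
  · intro f x h
    obtain ⟨f, rfl⟩ := e.surjective f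
    rw [show (⟨fun y => k y x h, _⟩ : LinearMap.range U) = e (V x h) from
        Subtype.ext (hkernel x h).symm, Gramian.comap_inner, LinearEquiv.coe_coe,
      e.symm_apply_apply, e.symm_apply_apply, he, hU, inner_adjoint_apply_left hV]
  · refine top_le_iff.1 <| (Submodule.span_image_eq_top_of_surjective
      (f := (e : K →ₗ[ℂ] LinearMap.range U)) e.surjective hmin).ge.trans (Submodule.span_mono ?_)
    rintro _ ⟨_, ⟨x, h, rfl⟩, rfl⟩
    exact ⟨x, h, hkernel x h⟩

/-- from a minimal VE-space linearisation `(K, V)` of a Hermitian kernel `k`,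
the map `U : K → (X → H)`, `(U f)(x) = V(x)* f`, is injective, and its range, with the
transported gramian `[U f, U g] := [f, g]_K`, is a minimal `H`-reproducing kernel
VE-space on `X` with reproducing kernel `k`. -/
theorem minimal_linearisation_to_reproducing_kernel
    {Z : Type*} [AddCommGroup Z] [Module ℂ Z] [StarAddMonoid Z] [StarModule ℂ Z]
    (O : StarCone Z)
    {H : Type*} [AddCommGroup H] [Module ℂ H] (gH : Gramian O H)
    {X : Type*} [Nonempty X]
    (k : X → X → (H →ₗ[ℂ] H))
    (hadj : ∀ x y : X, Adjointable gH gH (k x y))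
    (hherm : ∀ (x y : X) (f g : H), gH.inner (k y x f) g = gH.inner f (k x y g))
    {K : Type*} [AddCommGroup K] [Module ℂ K] (gK : Gramian O K)
    (V : X → (H →ₗ[ℂ] K)) (Vadj : X → (K →ₗ[ℂ] H))
    (hV : ∀ (x : X) (e : H) (f : K), gK.inner (V x e) f = gH.inner e (Vadj x f))
    (hk : ∀ (x y : X) (h : H), k x y h = Vadj x (V y h))
    (hmin : Submodule.span ℂ {v : K | ∃ (x : X) (h : H), V x h = v} = ⊤)
    (U : K →ₗ[ℂ] (X → H)) (hU : ∀ (f : K) (x : X), U f x = Vadj x f) :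
    Function.Injective U ∧
    ∃ gR : Gramian O ↥(LinearMap.range U),
      -- the gramian on the range is the transported one
      (∀ f g : K, gR.inner ⟨U f, LinearMap.mem_range_self U f⟩
          ⟨U g, LinearMap.mem_range_self U g⟩ = gK.inner f g) ∧
      -- the kernel functions belong to the range and reproduce
      ∃ hmem : ∀ (x : X) (h : H), (fun y => k y x h) ∈ LinearMap.range U,
        (∀ (f : ↥(LinearMap.range U)) (x : X) (h : H),
          gH.inner ((f : X → H) x) h = gR.inner f ⟨fun y => k y x h, hmem x h⟩) ∧
        -- minimality of the reproducing kernel space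
        Submodule.span ℂ {g : ↥(LinearMap.range U) |
          ∃ (x : X) (h : H), (g : X → H) = fun y => k y x h} = ⊤ :=
  minimal_linearisation_to_reproducing_kernel_general O gH k gK V Vadj hV hk hmin U hU
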